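/- If V : ℝ → ℝ is differentiable and (xₙ, pₙ) = Ψⁿ(x₀, p₀) for n ≥ 0, then the positions generated by the mollified impulse integrator satisfy the two-step recurrence x_{n+1} − 2·cos(hω)·xₙ + x_{n−1} = −(h²/m)·φ²·V'(φ·xₙ) for every n ≥ 1, where φ = sin(hω)/(hω). -/

import Mathlib

/-- The one-step mollified impulse integrator with mollifier factor `φ = sin(hω)/(hω)`:
the slow force is evaluated at the averaged position `φ·x` and multiplied by the
Jacobian `φ` of the averaging operator. -/
noncomputable def mollifiedImpulseStep (m ω h : ℝ) (V : ℝ → ℝ) : ℝ × ℝ → ℝ × ℝ :=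
  fun z =>
    let φ := Real.sin (h * ω) / (h * ω)
    let x := z.1
    let p := z.2
    let pbar := p - (h / 2) * (φ * deriv V (φ * x))
    let X := Real.cos (h * ω) * x + (Real.sin (h * ω) / (m * ω)) * pbar
    let pminus := -(m * ω) * Real.sin (h * ω) * x + Real.cos (h * ω) * pbar
    (X, pminus - (h / 2) * (φ * deriv V (φ * X)))

/-! The mollified impulse step is a kick–rotate–kick splitting whose linear part
`(x, p) ↦ (c x + D p, -a x + c p)` has determinant `cos² + sin² = 1`. Eliminating the momentum
turns the two half kicks `(h/2) φ V'(φ x)` around each position into one full kick, scaled by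
`D = sin(hω)/(mω) = hφ/m`, which yields the coefficient `h² φ² / m`. -/

def kickRotateKick (c D a : ℝ) (F : ℝ → ℝ) (z : ℝ × ℝ) : ℝ × ℝ :=
  let X := c * z.1 + D * (z.2 - F z.1)
  (X, -a * z.1 + c * (z.2 - F z.1) - F X)

/-- `D` times the half-kicked momentum is `x₁ - c x₀`, which eliminates the momentum. -/
theorem kickRotateKick_two_step {c D a : ℝ} (hdet : c ^ 2 + D * a = 1) (F : ℝ → ℝ)
    (z : ℝ × ℝ) :
    (kickRotateKick c D a F (kickRotateKick c D a F z)).1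
        - 2 * c * (kickRotateKick c D a F z).1 + z.1 =
      -2 * D * F (kickRotateKick c D a F z).1 := by
  simp only [kickRotateKick]
  linear_combination -z.1 * hdet

theorem mollifiedImpulseStep_eq_kickRotateKick (m ω h : ℝ) (V : ℝ → ℝ) :
    mollifiedImpulseStep m ω h V =
      kickRotateKick (Real.cos (h * ω)) (Real.sin (h * ω) / (m * ω)) (m * ω * Real.sin (h * ω))
        fun y =>
          h / 2 * (Real.sin (h * ω) / (h * ω) * deriv V (Real.sin (h * ω) / (h * ω) * y)) := by
  funext z
  simp only [mollifiedImpulseStep, kickRotateKick, neg_mul]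

theorem sin_mul_div_mul_eq (m ω h : ℝ) :
    Real.sin (h * ω) / (m * ω) = h / m * (Real.sin (h * ω) / (h * ω)) := by
  rcases eq_or_ne h 0 with rfl | hh
  · simp
  · rw [div_mul_div_comm, mul_left_comm m, mul_div_mul_left _ _ hh]

theorem cos_sq_add_sin_div_mul_sin (t : ℝ) {m ω : ℝ} (hm : m ≠ 0) :
    Real.cos (t * ω) ^ 2 + Real.sin (t * ω) / (m * ω) * (m * ω * Real.sin (t * ω)) = 1 := by
  have hmω : Real.sin (t * ω) / (m * ω) * (m * ω) = Real.sin (t * ω) :=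
    div_mul_cancel_of_imp fun h0 => by simp [(mul_eq_zero.mp h0).resolve_left hm]
  rw [← mul_assoc, hmω, ← sq, add_comm, Real.sin_sq_add_cos_sq]

theorem mollifiedImpulseStep_two_step_recurrence_general
    (m ω h : ℝ) (hm : 0 < m)
    (V : ℝ → ℝ)
    (x p : ℕ → ℝ)
    (hxp : ∀ n : ℕ, (x n, p n) = (mollifiedImpulseStep m ω h V)^[n] (x 0, p 0)) :
    ∀ n : ℕ, 1 ≤ n →
      x (n + 1) - 2 * Real.cos (h * ω) * x n + x (n - 1) =
        -(h ^ 2 / m) * (Real.sin (h * ω) / (h * ω)) ^ 2 *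
          deriv V ((Real.sin (h * ω) / (h * ω)) * x n) := by
  have hx (n : ℕ) : x n = ((mollifiedImpulseStep m ω h V)^[n] (x 0, p 0)).1 :=
    congrArg Prod.fst (hxp n)
  intro n hn
  obtain ⟨k, rfl⟩ : ∃ k, n = k + 1 := ⟨n - 1, by omega⟩
  rw [Nat.add_sub_cancel, hx (k + 1 + 1), hx (k + 1), hx k, Function.iterate_succ_apply',
    Function.iterate_succ_apply', mollifiedImpulseStep_eq_kickRotateKick,
    kickRotateKick_two_step (cos_sq_add_sin_div_mul_sin h hm.ne'), sin_mul_div_mul_eq]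
  ring

/-- the positions generated by the mollified impulse integrator satisfy the
two-step recurrence `x_{n+1} − 2 cos(hω) xₙ + x_{n−1} = −(h²/m)·φ²·V'(φ·xₙ)` for `n ≥ 1`,
where `φ = sin(hω)/(hω)`. -/
theorem mollifiedImpulseStep_two_step_recurrence
    (m ω h : ℝ) (hm : 0 < m) (hω : 0 < ω) (hh : 0 < h)
    (V : ℝ → ℝ) (hV : Differentiable ℝ V)
    (x p : ℕ → ℝ)
    (hxp : ∀ n : ℕ, (x n, p n) = (mollifiedImpulseStep m ω h V)^[n] (x 0, p 0)) :
    ∀ n : ℕ, 1 ≤ n →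
      x (n + 1) - 2 * Real.cos (h * ω) * x n + x (n - 1) =
        -(h ^ 2 / m) * (Real.sin (h * ω) / (h * ω)) ^ 2 *
          deriv V ((Real.sin (h * ω) / (h * ω)) * x n) :=
  mollifiedImpulseStep_two_step_recurrence_general m ω h hm V x p hxp
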